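/- arXiv:2605.09706 — 4 statements merged into one kernel-verified Lean document; each statement's English description precedes it below -/
import Mathlib

section
/- Weighted Volterra decomposition identity: let s, t > 0, a, b ≥ 0 and λ > 0. Then, as an identity in [0,∞] for integrals of nonnegative measurable functions: ∫₀^∞ e^{λv} ∫₀^v P_s(v+a−u) P_t(u+b) du dv = ∫₀^∞ e^{λv} ∫₀^∞ P_s(a+r) P_t(v+r+b) dr dv + ∫₀^∞ e^{λu} ∫₀^∞ P_s(u+a+r) P_t(r+b) dr du + 2λ ∫₀^∞ ∫₀^∞ e^{λ(u+v)} ∫₀^∞ P_s(u+a+r) P_t(v+r+b) dr du dv. -/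
open MeasureTheory Real
open scoped Classical

noncomputable section

abbrev E3 : Type := EuclideanSpace ℝ (Fin 3)

/-- Radial three-dimensional free heat kernel `P_t(r) = (4πt)^{-3/2} exp(-r²/(4t))`. -/
def heatR (t r : ℝ) : ℝ :=
  (4 * π * t) ^ (-(3 : ℝ) / 2) * Real.exp (-r ^ 2 / (4 * t))

/-- Three-dimensional free heat kernel `P_t(x,y) = (4πt)^{-3/2} exp(-|x-y|²/(4t))`. -/
def heatK (t : ℝ) (x y : E3) : ℝ :=
  (4 * π * t) ^ (-(3 : ℝ) / 2) * Real.exp (-‖x - y‖ ^ 2 / (4 * t))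

/-- Three-dimensional attractive point interaction heat kernel `P_t^β(x,y)`. -/
def Pbeta (β t : ℝ) (x y : E3) : ℝ :=
  heatK t x y + 2 * t / (‖x‖ * ‖y‖) * heatR t (‖x‖ + ‖y‖)
    + 8 * π * β * t / (‖x‖ * ‖y‖) *
        ∫ u in Set.Ioi (0 : ℝ), Real.exp (4 * π * β * u) * heatR t (u + ‖x‖ + ‖y‖)

/-- Mass excess function `Q_t^β(x)`, with `Q_0^β(x) := 0`. -/
def Qbeta (β t : ℝ) (x : E3) : ℝ :=
  if t = 0 then 0
  else
    (4 * π * β * ‖x‖ * Real.sqrt (π * t))⁻¹ *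
      ∫ w in Set.Ioi (0 : ℝ),
        (Real.exp (4 * π * β * w) - 1) * Real.exp (-(‖x‖ + w) ^ 2 / (4 * t))

/-- Doob-transformed transition density `p_{s,t}^{T,β}(x,y)` (set to `0` at `y = 0`). -/
def doobP (T β s t : ℝ) (x y : E3) : ℝ :=
  if y = 0 then 0
  else (1 + Qbeta β (T - t) y) / (1 + Qbeta β (T - s) x) * Pbeta β (t - s) x y

/-- Complementary error function `erfc(z) = (2/√π) ∫_z^∞ e^{-u²} du`. -/
def erfc (z : ℝ) : ℝ := 2 / Real.sqrt π * ∫ u in Set.Ioi z, Real.exp (-u ^ 2)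

/-!
With `A_f(r) = ∫_0^∞ e^{λu} f(u + r) du` (`expTail lam f r`), the left side is the exponentially
weighted integral of a convolution and factors as `A_f(0) A_g(0)`, while the three terms on the
right are `∫ f A_g`, `∫ g A_f` and `2λ ∫ A_f A_g`; here `f = P_s(· + a)`, `g = P_t(· + b)`.
The identity then comes from integrating, by Tonelli, the pointwise kernel identity
`e^{λx} e^{λy} = e^{λ|x-y|} + 2λ ∫_0^{min x y} e^{λ(x-r)} e^{λ(y-r)} dr` (for `x, y ≥ 0`)
against `f(x) g(y)`: splitting the first term along `y < x` and `x < y` gives `∫ g A_f + ∫ f A_g`,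
and exchanging the order in the second gives `2λ ∫ A_f A_g`.
-/

open Set Function
open scoped ENNReal

section SliceSwap

variable {α β : Type*} [MeasurableSpace α] [MeasurableSpace β] {μ : Measure α} {ν : Measure β}
  {r : α → β → Prop} {Φ : α → β → ℝ≥0∞}

lemma setLIntegral_slice_eq_lintegral_indicator (hr : MeasurableSet {p : α × β | r p.1 p.2})
    (x : α) :
    ∫⁻ y in {y | r x y}, Φ x y ∂ν
      = ∫⁻ y, {p : α × β | r p.1 p.2}.indicator (uncurry Φ) (x, y) ∂ν :=
  (lintegral_indicator (measurable_prodMk_left hr) _).symm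

lemma Measurable.setLIntegral_slice [SFinite ν] (hr : MeasurableSet {p : α × β | r p.1 p.2})
    (hΦ : Measurable (uncurry Φ)) :
    Measurable fun x => ∫⁻ y in {y | r x y}, Φ x y ∂ν := by
  simp_rw [setLIntegral_slice_eq_lintegral_indicator hr]
  exact (hΦ.indicator hr).lintegral_prod_right'

lemma lintegral_setLIntegral_swap [SFinite μ] [SFinite ν]
    (hr : MeasurableSet {p : α × β | r p.1 p.2}) (hΦ : Measurable (uncurry Φ)) :
    ∫⁻ x, ∫⁻ y in {y | r x y}, Φ x y ∂ν ∂μ = ∫⁻ y, ∫⁻ x in {x | r x y}, Φ x y ∂μ ∂ν := by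
  have hslice : ∀ y, ∫⁻ x in {x | r x y}, Φ x y ∂μ
      = ∫⁻ x, {p : α × β | r p.1 p.2}.indicator (uncurry Φ) (x, y) ∂μ := fun y =>
    (lintegral_indicator (measurable_prodMk_right hr) _).symm
  simp_rw [setLIntegral_slice_eq_lintegral_indicator hr, hslice]
  exact lintegral_lintegral_swap (hΦ.indicator hr).aemeasurable

end SliceSwap

lemma restrict_Ioi_restrict_Ioi_of_le (μ : Measure ℝ) {a b : ℝ} (hab : a ≤ b) :
    (μ.restrict (Ioi a)).restrict (Ioi b) = μ.restrict (Ioi b) := by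
  rw [Measure.restrict_restrict measurableSet_Ioi, Ioi_inter_Ioi, sup_eq_left.2 hab]

lemma setLIntegral_Ioi_eq_setLIntegral_Ioi_zero_add (c : ℝ) (f : ℝ → ℝ≥0∞) :
    ∫⁻ x in Ioi c, f x = ∫⁻ x in Ioi 0, f (x + c) := by
  rw [← (measurePreserving_add_right volume c).setLIntegral_comp_preimage_emb
      (measurableEmbedding_addRight c) f (Ioi c), preimage_add_const_Ioi, sub_self]

section SwapOnHalfLine

variable {μ : Measure ℝ} [SFinite μ] {Φ : ℝ → ℝ → ℝ≥0∞}

lemma setLIntegral_Ioi_setLIntegral_Ioo_swap (hΦ : Measurable (uncurry Φ)) :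
    ∫⁻ v in Ioi 0, ∫⁻ u in Ioo 0 v, Φ u v ∂μ ∂μ = ∫⁻ u in Ioi 0, ∫⁻ v in Ioi u, Φ u v ∂μ ∂μ := by
  have hIoo : ∀ v : ℝ, μ.restrict (Ioo 0 v) = (μ.restrict (Ioi 0)).restrict (Iio v) :=
    fun v => by rw [Measure.restrict_restrict measurableSet_Iio, Iio_inter_Ioi]
  simp_rw [hIoo]
  calc _ = ∫⁻ u in Ioi 0, ∫⁻ v in Ioi u, Φ u v ∂(μ.restrict (Ioi 0)) ∂μ :=
        lintegral_setLIntegral_swap (r := fun v u => u < v)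
          (measurableSet_lt measurable_snd measurable_fst) (hΦ.comp measurable_swap)
    _ = _ := setLIntegral_congr_fun measurableSet_Ioi fun u (hu : 0 < u) => by
        rw [restrict_Ioi_restrict_Ioi_of_le μ hu.le]

lemma setLIntegral_Ioi_setLIntegral_Ioo_min_swap (x : ℝ) (hΦ : Measurable (uncurry Φ)) :
    ∫⁻ y in Ioi 0, ∫⁻ r in Ioo 0 (min x y), Φ r y ∂μ ∂μ
      = ∫⁻ r in Ioo 0 x, ∫⁻ y in Ioi r, Φ r y ∂μ ∂μ := by
  have hIoo : ∀ y : ℝ, μ.restrict (Ioo 0 (min x y))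
      = (μ.restrict (Ioo 0 x)).restrict (Iio y) := fun y => by
    rw [Measure.restrict_restrict measurableSet_Iio]
    congr 1
    ext r
    simp only [mem_Ioo, lt_min_iff, mem_inter_iff, mem_Iio]
    tauto
  simp_rw [hIoo]
  calc _ = ∫⁻ r in Ioo 0 x, ∫⁻ y in Ioi r, Φ r y ∂(μ.restrict (Ioi 0)) ∂μ :=
        lintegral_setLIntegral_swap (r := fun y r => r < y)
          (measurableSet_lt measurable_snd measurable_fst) (hΦ.comp measurable_swap)
    _ = _ := setLIntegral_congr_fun measurableSet_Ioo fun r (hr : r ∈ Ioo 0 x) => by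
        rw [restrict_Ioi_restrict_Ioi_of_le μ hr.1.le]

end SwapOnHalfLine

lemma integral_two_mul_exp_sub (c lam m : ℝ) :
    ∫ r in (0 : ℝ)..m, 2 * lam * exp (c - 2 * lam * r) = exp c - exp (c - 2 * lam * m) := by
  have hderiv : ∀ r ∈ uIcc 0 m,
      HasDerivAt (fun r => -exp (c - 2 * lam * r)) (2 * lam * exp (c - 2 * lam * r)) r := by
    intro r _
    exact (((hasDerivAt_id' r).const_mul (2 * lam)).const_sub c).exp.neg.congr_deriv (by ring)
  rw [intervalIntegral.integral_eq_sub_of_hasDerivAt hderiv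
    ((by fun_prop : Continuous _).intervalIntegrable _ _)]
  simp only [mul_zero, sub_zero]
  ring

lemma ofReal_exp_mul_mul_ofReal_exp_mul {lam x y : ℝ} (hlam : 0 ≤ lam) (hx : 0 ≤ x) (hy : 0 ≤ y) :
    ENNReal.ofReal (exp (lam * x)) * ENNReal.ofReal (exp (lam * y))
      = ENNReal.ofReal (exp (lam * |x - y|)) + ENNReal.ofReal (2 * lam) *
          ∫⁻ r in Ioo 0 (min x y),
            ENNReal.ofReal (exp (lam * (x - r))) * ENNReal.ofReal (exp (lam * (y - r))) := by
  have hm : 0 ≤ min x y := le_min hx hy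
  have habs : lam * (x + y) - 2 * lam * min x y = lam * |x - y| := by
    rw [← max_sub_min_eq_abs, ← min_add_max x y, min_comm, max_comm]
    ring
  have hcross : ∀ r, ENNReal.ofReal (2 * lam) *
      (ENNReal.ofReal (exp (lam * (x - r))) * ENNReal.ofReal (exp (lam * (y - r))))
        = ENNReal.ofReal (2 * lam * exp (lam * (x + y) - 2 * lam * r)) := fun r => by
    rw [← ENNReal.ofReal_mul (exp_pos _).le, ← exp_add, ← ENNReal.ofReal_mul (by positivity)]
    congr 3
    ring
  have hint : IntegrableOn (fun r => 2 * lam * exp (lam * (x + y) - 2 * lam * r))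
      (Ioo 0 (min x y)) :=
    (Continuous.integrableOn_Icc (by fun_prop)).mono_set Ioo_subset_Icc_self
  rw [← lintegral_const_mul' _ _ ENNReal.ofReal_ne_top]
  simp_rw [hcross]
  rw [← ofReal_integral_eq_lintegral_ofReal hint (.of_forall fun r => by positivity),
    ← integral_Ioc_eq_integral_Ioo, ← intervalIntegral.integral_of_le hm,
    integral_two_mul_exp_sub, habs,
    ← ENNReal.ofReal_add (exp_pos _).le (sub_nonneg.2 (exp_le_exp.2 (by rw [← habs]; nlinarith))),
    add_sub_cancel, ← ENNReal.ofReal_mul (exp_pos _).le, ← exp_add, mul_add]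

def expTail (lam : ℝ) (f : ℝ → ℝ≥0∞) (r : ℝ) : ℝ≥0∞ :=
  ∫⁻ u in Ioi 0, ENNReal.ofReal (exp (lam * u)) * f (u + r)

section ExpTail

variable {lam : ℝ} {f g : ℝ → ℝ≥0∞}

lemma ofReal_exp_mul_add (lam p q : ℝ) :
    ENNReal.ofReal (exp (lam * (p + q)))
      = ENNReal.ofReal (exp (lam * p)) * ENNReal.ofReal (exp (lam * q)) := by
  rw [mul_add, exp_add, ENNReal.ofReal_mul (exp_pos _).le]

lemma setLIntegral_Ioi_eq_expTail (r : ℝ) :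
    ∫⁻ x in Ioi r, ENNReal.ofReal (exp (lam * (x - r))) * f x = expTail lam f r := by
  simp only [setLIntegral_Ioi_eq_setLIntegral_Ioi_zero_add r, add_sub_cancel_right, expTail]

lemma expTail_zero_eq (lam : ℝ) (f : ℝ → ℝ≥0∞) :
    expTail lam f 0 = ∫⁻ u in Ioi 0, ENNReal.ofReal (exp (lam * u)) * f u := by
  simp only [expTail, add_zero]

@[fun_prop]
lemma measurable_expTail (lam : ℝ) (hf : Measurable f) : Measurable (expTail lam f) :=
  Measurable.lintegral_prod_right (f := fun r u => ENNReal.ofReal (exp (lam * u)) * f (u + r))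
    (by fun_prop)

lemma lintegral_exp_mul_volterra_eq_expTail_mul (hf : Measurable f) (hg : Measurable g) :
    ∫⁻ v in Ioi 0, ENNReal.ofReal (exp (lam * v)) * ∫⁻ u in Ioo 0 v, f (v - u) * g u
      = expTail lam f 0 * expTail lam g 0 := by
  calc _ = ∫⁻ v in Ioi 0, ∫⁻ u in Ioo 0 v, ENNReal.ofReal (exp (lam * v)) * (f (v - u) * g u) := by
        simp_rw [lintegral_const_mul' _ _ ENNReal.ofReal_ne_top]
    _ = ∫⁻ u in Ioi 0, ∫⁻ v in Ioi u, ENNReal.ofReal (exp (lam * v)) * (f (v - u) * g u) :=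
        setLIntegral_Ioi_setLIntegral_Ioo_swap (Φ := fun u v => _ * (f (v - u) * g u))
          (by fun_prop)
    _ = ∫⁻ u in Ioi 0, ∫⁻ w in Ioi 0, (ENNReal.ofReal (exp (lam * u)) * g u) *
          (ENNReal.ofReal (exp (lam * w)) * f w) := by
        refine lintegral_congr fun u => ?_
        rw [setLIntegral_Ioi_eq_setLIntegral_Ioi_zero_add u]
        refine lintegral_congr fun w => ?_
        rw [add_sub_cancel_right, ofReal_exp_mul_add]
        ring
    _ = expTail lam f 0 * expTail lam g 0 := by
        rw [lintegral_lintegral_mul (by fun_prop) (by fun_prop), expTail_zero_eq, expTail_zero_eq,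
          mul_comm]

lemma lintegral_exp_mul_lintegral_mul_add (hf : Measurable f) (hg : Measurable g) :
    ∫⁻ v in Ioi 0, ENNReal.ofReal (exp (lam * v)) * ∫⁻ r in Ioi 0, f r * g (v + r)
      = ∫⁻ r in Ioi 0, f r * expTail lam g r := by
  calc _ = ∫⁻ v in Ioi 0, ∫⁻ r in Ioi 0, ENNReal.ofReal (exp (lam * v)) * (f r * g (v + r)) := by
        simp_rw [lintegral_const_mul' _ _ ENNReal.ofReal_ne_top]
    _ = ∫⁻ r in Ioi 0, ∫⁻ v in Ioi 0, ENNReal.ofReal (exp (lam * v)) * (f r * g (v + r)) :=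
        lintegral_lintegral_swap (by fun_prop)
    _ = _ := by
        refine lintegral_congr fun r => ?_
        rw [expTail, ← lintegral_const_mul _ (by fun_prop)]
        exact lintegral_congr fun v => by ring

lemma lintegral_lintegral_exp_mul_lintegral_mul_add (hf : Measurable f) (hg : Measurable g) :
    ∫⁻ u in Ioi 0, ∫⁻ v in Ioi 0, ENNReal.ofReal (exp (lam * (u + v))) *
        ∫⁻ r in Ioi 0, f (u + r) * g (v + r)
      = ∫⁻ r in Ioi 0, expTail lam f r * expTail lam g r := by
  calc _ = ∫⁻ u in Ioi 0, ∫⁻ v in Ioi 0, ∫⁻ r in Ioi 0,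
          (ENNReal.ofReal (exp (lam * u)) * f (u + r)) *
            (ENNReal.ofReal (exp (lam * v)) * g (v + r)) := by
        refine lintegral_congr fun u => lintegral_congr fun v => ?_
        rw [ofReal_exp_mul_add, ← lintegral_const_mul' _ _ (by finiteness)]
        exact lintegral_congr fun r => by ring
    _ = ∫⁻ u in Ioi 0, ∫⁻ r in Ioi 0, (ENNReal.ofReal (exp (lam * u)) * f (u + r)) *
          expTail lam g r := by
        refine lintegral_congr fun u => ?_
        rw [lintegral_lintegral_swap (by fun_prop)]
        exact lintegral_congr fun r => lintegral_const_mul _ (by fun_prop)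
    _ = ∫⁻ r in Ioi 0, ∫⁻ u in Ioi 0, (ENNReal.ofReal (exp (lam * u)) * f (u + r)) *
          expTail lam g r :=
        lintegral_lintegral_swap (by fun_prop)
    _ = _ := lintegral_congr fun r => lintegral_mul_const _ (by fun_prop)

lemma lintegral_lintegral_exp_mul_abs_sub (hf : Measurable f) (hg : Measurable g) :
    ∫⁻ x in Ioi 0, ∫⁻ y in Ioi 0, ENNReal.ofReal (exp (lam * |x - y|)) * (f x * g y)
      = (∫⁻ x in Ioi 0, f x * expTail lam g x) + ∫⁻ y in Ioi 0, g y * expTail lam f y := by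
  have hsplit : ∀ x ∈ Ioi (0 : ℝ),
      ∫⁻ y in Ioi 0, ENNReal.ofReal (exp (lam * |x - y|)) * (f x * g y)
        = (∫⁻ y in Ioo 0 x, ENNReal.ofReal (exp (lam * (x - y))) * (f x * g y))
          + f x * expTail lam g x := by
    intro x (hx : 0 < x)
    rw [← lintegral_add_compl _ (measurableSet_Ioi : MeasurableSet (Ioi x)), compl_Ioi,
      restrict_Ioi_restrict_Ioi_of_le volume hx.le, Measure.restrict_restrict measurableSet_Iic,
      Iic_inter_Ioi, add_comm, ← setLIntegral_Ioi_eq_expTail, ← lintegral_const_mul _ (by fun_prop),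
      setLIntegral_congr Ioo_ae_eq_Ioc.symm]
    congr 1
    · refine setLIntegral_congr_fun measurableSet_Ioo fun y (hy : y ∈ Ioo 0 x) => ?_
      rw [abs_of_nonneg (by linarith [hy.2])]
    · refine setLIntegral_congr_fun measurableSet_Ioi fun y (hy : x < y) => ?_
      rw [abs_of_nonpos (by linarith), neg_sub]
      ring
  have hmeas : Measurable fun x =>
      ∫⁻ y in Ioo 0 x, ENNReal.ofReal (exp (lam * (x - y))) * (f x * g y) :=
    Measurable.setLIntegral_slice (r := fun x y => 0 < y ∧ y < x)
      ((measurableSet_lt measurable_const measurable_snd).inter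
        (measurableSet_lt measurable_snd measurable_fst)) (by fun_prop)
  rw [setLIntegral_congr_fun measurableSet_Ioi hsplit, lintegral_add_left hmeas, add_comm,
    setLIntegral_Ioi_setLIntegral_Ioo_swap (Φ := fun y x => _ * (f x * g y)) (by fun_prop)]
  congr 1
  refine lintegral_congr fun y => ?_
  rw [← setLIntegral_Ioi_eq_expTail, ← lintegral_const_mul _ (by fun_prop)]
  exact lintegral_congr fun x => by ring

lemma lintegral_lintegral_setLIntegral_Ioo_min (hf : Measurable f) (hg : Measurable g) :
    ∫⁻ x in Ioi 0, ∫⁻ y in Ioi 0, (∫⁻ r in Ioo 0 (min x y),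
        ENNReal.ofReal (exp (lam * (x - r))) * ENNReal.ofReal (exp (lam * (y - r)))) * (f x * g y)
      = ∫⁻ r in Ioi 0, expTail lam f r * expTail lam g r := by
  calc _ = ∫⁻ x in Ioi 0, ∫⁻ y in Ioi 0, ∫⁻ r in Ioo 0 (min x y),
          (ENNReal.ofReal (exp (lam * (x - r))) * f x) *
            (ENNReal.ofReal (exp (lam * (y - r))) * g y) := by
        refine lintegral_congr fun x => lintegral_congr fun y => ?_
        rw [← lintegral_mul_const _ (by fun_prop)]
        exact lintegral_congr fun r => by ring
    _ = ∫⁻ x in Ioi 0, ∫⁻ r in Ioo 0 x, (ENNReal.ofReal (exp (lam * (x - r))) * f x) *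
          expTail lam g r := by
        refine lintegral_congr fun x => ?_
        rw [setLIntegral_Ioi_setLIntegral_Ioo_min_swap x
          (Φ := fun r y => _ * (ENNReal.ofReal (exp (lam * (y - r))) * g y)) (by fun_prop)]
        refine lintegral_congr fun r => ?_
        rw [← setLIntegral_Ioi_eq_expTail, lintegral_const_mul _ (by fun_prop)]
    _ = ∫⁻ r in Ioi 0, ∫⁻ x in Ioi r, (ENNReal.ofReal (exp (lam * (x - r))) * f x) *
          expTail lam g r :=
        setLIntegral_Ioi_setLIntegral_Ioo_swap (Φ := fun r x => _ * f x * expTail lam g r)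
          (by fun_prop)
    _ = _ := by
        refine lintegral_congr fun r => ?_
        rw [lintegral_mul_const _ (by fun_prop), setLIntegral_Ioi_eq_expTail]

lemma expTail_zero_mul_expTail_zero (hlam : 0 ≤ lam) (hf : Measurable f) (hg : Measurable g) :
    expTail lam f 0 * expTail lam g 0
      = (∫⁻ x in Ioi 0, f x * expTail lam g x) + (∫⁻ y in Ioi 0, g y * expTail lam f y)
        + ENNReal.ofReal (2 * lam) * ∫⁻ r in Ioi 0, expTail lam f r * expTail lam g r := by
  rw [← lintegral_lintegral_exp_mul_abs_sub hf hg, ← lintegral_lintegral_setLIntegral_Ioo_min hf hg,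
    expTail_zero_eq, expTail_zero_eq, ← lintegral_lintegral_mul (by fun_prop) (by fun_prop),
    ← lintegral_const_mul' _ _ ENNReal.ofReal_ne_top,
    ← lintegral_add_left (Measurable.lintegral_prod_right
      (f := fun x y => ENNReal.ofReal (exp (lam * |x - y|)) * (f x * g y)) (by fun_prop))]
  refine setLIntegral_congr_fun measurableSet_Ioi fun x (hx : 0 < x) => ?_
  rw [← lintegral_const_mul' _ _ ENNReal.ofReal_ne_top,
    ← lintegral_add_left (f := fun y => ENNReal.ofReal (exp (lam * |x - y|)) * (f x * g y))
      (by fun_prop)]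
  refine setLIntegral_congr_fun measurableSet_Ioi fun y (hy : 0 < y) => ?_
  rw [mul_mul_mul_comm, ofReal_exp_mul_mul_ofReal_exp_mul hlam hx.le hy.le]
  ring

end ExpTail

theorem lintegral_exp_mul_volterra_decomposition {lam : ℝ} {f g : ℝ → ℝ≥0∞} (hlam : 0 ≤ lam)
    (hf : Measurable f) (hg : Measurable g) :
    (∫⁻ v in Ioi 0, ENNReal.ofReal (exp (lam * v)) * ∫⁻ u in Ioo 0 v, f (v - u) * g u)
      = (∫⁻ v in Ioi 0, ENNReal.ofReal (exp (lam * v)) * ∫⁻ r in Ioi 0, f r * g (v + r))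
        + (∫⁻ u in Ioi 0, ENNReal.ofReal (exp (lam * u)) * ∫⁻ r in Ioi 0, f (u + r) * g r)
        + ENNReal.ofReal (2 * lam) * ∫⁻ u in Ioi 0, ∫⁻ v in Ioi 0,
            ENNReal.ofReal (exp (lam * (u + v))) * ∫⁻ r in Ioi 0, f (u + r) * g (v + r) := by
  -- the middle term is `lintegral_exp_mul_lintegral_mul_add` with `f` and `g` exchanged
  simp_rw [mul_comm (f (_ + _)) (g _)]
  rw [lintegral_exp_mul_volterra_eq_expTail_mul hf hg, expTail_zero_mul_expTail_zero hlam hf hg,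
    lintegral_exp_mul_lintegral_mul_add hf hg, lintegral_exp_mul_lintegral_mul_add hg hf]
  simp_rw [mul_comm (g _) (f (_ + _))]
  rw [lintegral_lintegral_exp_mul_lintegral_mul_add hf hg]

lemma heatR_nonneg {t : ℝ} (ht : 0 ≤ t) (r : ℝ) : 0 ≤ heatR t r :=
  mul_nonneg (rpow_nonneg (by positivity) _) (exp_pos _).le

theorem weighted_volterra_decomposition_general (s t a b lam : ℝ)
    (hs : 0 < s) (hlam : 0 < lam) :
    (∫⁻ v in Set.Ioi (0 : ℝ), ENNReal.ofReal (Real.exp (lam * v)) *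
        ∫⁻ u in Set.Ioo (0 : ℝ) v, ENNReal.ofReal (heatR s (v + a - u) * heatR t (u + b)))
      = (∫⁻ v in Set.Ioi (0 : ℝ), ENNReal.ofReal (Real.exp (lam * v)) *
            ∫⁻ r in Set.Ioi (0 : ℝ), ENNReal.ofReal (heatR s (a + r) * heatR t (v + r + b)))
        + (∫⁻ u in Set.Ioi (0 : ℝ), ENNReal.ofReal (Real.exp (lam * u)) *
            ∫⁻ r in Set.Ioi (0 : ℝ), ENNReal.ofReal (heatR s (u + a + r) * heatR t (r + b)))
        + ENNReal.ofReal (2 * lam) *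
            ∫⁻ u in Set.Ioi (0 : ℝ), ∫⁻ v in Set.Ioi (0 : ℝ),
              ENNReal.ofReal (Real.exp (lam * (u + v))) *
                ∫⁻ r in Set.Ioi (0 : ℝ),
                  ENNReal.ofReal (heatR s (u + a + r) * heatR t (v + r + b)) := by
  have hf : Measurable fun x => ENNReal.ofReal (heatR s (a + x)) := by unfold heatR; fun_prop
  have hg : Measurable fun y => ENNReal.ofReal (heatR t (y + b)) := by unfold heatR; fun_prop
  have hshift : ∀ x y : ℝ, x + a + y = a + (x + y) ∧ x + a - y = a + (x - y) :=
    fun x y => ⟨by ring, by ring⟩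
  simp only [ENNReal.ofReal_mul (heatR_nonneg hs.le _), hshift]
  exact lintegral_exp_mul_volterra_decomposition hlam.le hf hg

theorem weighted_volterra_decomposition (s t a b lam : ℝ)
    (hs : 0 < s) (ht : 0 < t) (ha : 0 ≤ a) (hb : 0 ≤ b) (hlam : 0 < lam) :
    (∫⁻ v in Set.Ioi (0 : ℝ), ENNReal.ofReal (Real.exp (lam * v)) *
        ∫⁻ u in Set.Ioo (0 : ℝ) v, ENNReal.ofReal (heatR s (v + a - u) * heatR t (u + b)))
      = (∫⁻ v in Set.Ioi (0 : ℝ), ENNReal.ofReal (Real.exp (lam * v)) *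
            ∫⁻ r in Set.Ioi (0 : ℝ), ENNReal.ofReal (heatR s (a + r) * heatR t (v + r + b)))
        + (∫⁻ u in Set.Ioi (0 : ℝ), ENNReal.ofReal (Real.exp (lam * u)) *
            ∫⁻ r in Set.Ioi (0 : ℝ), ENNReal.ofReal (heatR s (u + a + r) * heatR t (r + b)))
        + ENNReal.ofReal (2 * lam) *
            ∫⁻ u in Set.Ioi (0 : ℝ), ∫⁻ v in Set.Ioi (0 : ℝ),
              ENNReal.ofReal (Real.exp (lam * (u + v))) *
                ∫⁻ r in Set.Ioi (0 : ℝ),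
                  ENNReal.ofReal (heatR s (u + a + r) * heatR t (v + r + b)) :=
  weighted_volterra_decomposition_general s t a b lam hs hlam
end
end

section
/- For every t > 0 and every x ∈ ℝ³ \ {0}: ∫_{ℝ³} (1/|y|) · P_t(|x|+|y|) dy = (πt)^{-1/2} e^{−|x|²/(4t)} − (|x|/(2t)) · erfc(|x|/(2√t)). -/
open MeasureTheory Real
open scoped Classical

noncomputable section

/-!
In polar coordinates the weight `1 / ‖y‖` cancels one power of the Jacobian `r²`, leaving
`4π ∫₀^∞ r P_t(‖x‖ + r) dr`. Substituting `s = ‖x‖ + r` and writing `r = s - ‖x‖` splits this into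
`∫_{‖x‖}^∞ s P_t(s) ds = 2t P_t(‖x‖)`, since `-2t P_t` is an antiderivative of `s P_t(s)`, and the
Gaussian tail `‖x‖ ∫_{‖x‖}^∞ P_t(s) ds`, which is an `erfc` after the scaling `s = 2√t u`.
-/

open Set Filter Topology

theorem integral_comp_add_right_Ioi {F : Type*} [NormedAddCommGroup F] [NormedSpace ℝ F]
    (g : ℝ → F) (a b : ℝ) : ∫ x in Ioi a, g (x + b) = ∫ x in Ioi (a + b), g x := by
  simpa [preimage_add_const_Ioi] using
    (measurePreserving_add_right volume b).setIntegral_preimage_emb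
      (measurableEmbedding_addRight b) g (Ioi (a + b))

theorem integral_fun_norm_euclideanSpace_fin_three {F : Type*} [NormedAddCommGroup F]
    [NormedSpace ℝ F] (f : ℝ → F) :
    ∫ y : EuclideanSpace ℝ (Fin 3), f ‖y‖ = (4 * π) • ∫ r in Ioi (0 : ℝ), r ^ 2 • f r := by
  rw [integral_fun_norm_addHaar, finrank_euclideanSpace_fin, measureReal_def,
    EuclideanSpace.volume_ball_fin_three, ENNReal.ofReal_one, one_pow, one_mul,
    ENNReal.toReal_ofReal (by positivity), ← Nat.cast_smul_eq_nsmul ℝ, smul_smul]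
  norm_num
  ring_nf

theorem integral_Ioi_mul_exp_neg_mul_sq {b : ℝ} (hb : 0 < b) (a : ℝ) :
    ∫ s in Ioi a, s * exp (-b * s ^ 2) = exp (-b * a ^ 2) / (2 * b) := by
  have hderiv (s : ℝ) :
      HasDerivAt (fun s ↦ -exp (-b * s ^ 2) / (2 * b)) (s * exp (-b * s ^ 2)) s :=
    (((hasDerivAt_pow 2 s).const_mul (-b)).exp.neg.div_const (2 * b)).congr_deriv
      (by field_simp; ring)
  have hlim : Tendsto (fun s ↦ -exp (-b * s ^ 2) / (2 * b)) atTop (𝓝 0) := by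
    simpa using ((tendsto_exp_atBot.comp <| (tendsto_pow_atTop two_ne_zero).const_mul_atTop_of_neg
      (neg_lt_zero.2 hb)).neg.div_const (2 * b))
  rw [integral_Ioi_of_hasDerivAt_of_tendsto' (fun s _ ↦ hderiv s)
    (integrable_mul_exp_neg_mul_sq hb).integrableOn hlim]
  ring

theorem integral_Ioi_exp_neg_sq_div {t : ℝ} (ht : 0 < t) (a : ℝ) :
    ∫ s in Ioi a, exp (-s ^ 2 / (4 * t)) = sqrt (π * t) * erfc (a / (2 * sqrt t)) := by
  have hc : 0 < 2 * sqrt t := by positivity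
  have h := integral_comp_mul_left_Ioi (fun s ↦ exp (-s ^ 2 / (4 * t))) (a / (2 * sqrt t)) hc
  have hsq (u : ℝ) : -(2 * sqrt t * u) ^ 2 / (4 * t) = -u ^ 2 := by
    rw [mul_pow, mul_pow, sq_sqrt ht.le]; field_simp; ring
  simp only [hsq, mul_div_cancel₀ a hc.ne', smul_eq_mul] at h
  rw [erfc, h, sqrt_mul pi_pos.le]
  field_simp

theorem rpow_neg_three_halves {x : ℝ} (hx : 0 ≤ x) : x ^ (-(3 : ℝ) / 2) = (x * sqrt x)⁻¹ := by
  rw [neg_div, rpow_neg hx, show (3 : ℝ) / 2 = 1 + 1 / 2 by norm_num, rpow_add' hx (by norm_num),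
    rpow_one, sqrt_eq_rpow]

theorem heatR_eq_mul_exp_neg_mul_sq (t s : ℝ) :
    heatR t s = (4 * π * t) ^ (-(3 : ℝ) / 2) * exp (-(4 * t)⁻¹ * s ^ 2) := by
  rw [heatR, neg_mul, ← div_eq_inv_mul, ← neg_div]

theorem integrable_heatR {t : ℝ} (ht : 0 < t) : Integrable (heatR t) := by
  simpa only [← heatR_eq_mul_exp_neg_mul_sq] using
    (integrable_exp_neg_mul_sq (inv_pos.2 (by positivity : 0 < 4 * t))).const_mul
      ((4 * π * t) ^ (-(3 : ℝ) / 2))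

theorem integrable_mul_heatR {t : ℝ} (ht : 0 < t) : Integrable fun s ↦ s * heatR t s := by
  simpa only [heatR_eq_mul_exp_neg_mul_sq, mul_left_comm _ ((4 * π * t) ^ (-(3 : ℝ) / 2))] using
    (integrable_mul_exp_neg_mul_sq (inv_pos.2 (by positivity : 0 < 4 * t))).const_mul
      ((4 * π * t) ^ (-(3 : ℝ) / 2))

theorem integral_Ioi_mul_heatR {t : ℝ} (ht : 0 < t) (a : ℝ) :
    ∫ s in Ioi a, s * heatR t s = 2 * t * heatR t a := by
  simp only [heatR_eq_mul_exp_neg_mul_sq, mul_left_comm _ ((4 * π * t) ^ (-(3 : ℝ) / 2))]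
  rw [integral_const_mul, integral_Ioi_mul_exp_neg_mul_sq (inv_pos.2 (by positivity))]
  field_simp
  norm_num

theorem integral_Ioi_heatR {t : ℝ} (ht : 0 < t) (a : ℝ) :
    ∫ s in Ioi a, heatR t s =
      (4 * π * t) ^ (-(3 : ℝ) / 2) * sqrt (π * t) * erfc (a / (2 * sqrt t)) := by
  simp only [heatR]
  rw [integral_const_mul, integral_Ioi_exp_neg_sq_div ht, ← mul_assoc]

theorem integral_Ioi_mul_heatR_add {t : ℝ} (ht : 0 < t) (a : ℝ) :
    ∫ r in Ioi 0, r * heatR t (a + r) = 2 * t * heatR t a - a * ∫ s in Ioi a, heatR t s := by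
  have hshift (g : ℝ → ℝ) : ∫ r in Ioi 0, g (r + a) = ∫ s in Ioi a, g s := by
    simpa using integral_comp_add_right_Ioi g 0 a
  calc ∫ r in Ioi 0, r * heatR t (a + r)
      = ∫ r in Ioi 0, ((r + a) * heatR t (r + a) - a * heatR t (r + a)) := by
        congr 1; ext r; rw [add_comm a r]; ring
    _ = 2 * t * heatR t a - a * ∫ s in Ioi a, heatR t s := by
        rw [integral_sub, integral_const_mul, hshift (fun s ↦ s * heatR t s), hshift (heatR t),
          integral_Ioi_mul_heatR ht]
        · exact ((integrable_mul_heatR ht).comp_add_right a).integrableOn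
        · exact (((integrable_heatR ht).comp_add_right a).const_mul a).integrableOn

theorem radial_heat_integral_general (t : ℝ) (ht : 0 < t) (x : E3) :
    ∫ y : E3, 1 / ‖y‖ * heatR t (‖x‖ + ‖y‖)
      = (Real.sqrt (π * t))⁻¹ * Real.exp (-‖x‖ ^ 2 / (4 * t))
        - ‖x‖ / (2 * t) * erfc (‖x‖ / (2 * Real.sqrt t)) := by
  have hrad : ∫ y : E3, 1 / ‖y‖ * heatR t (‖x‖ + ‖y‖)
      = 4 * π * ∫ r in Ioi 0, r * heatR t (‖x‖ + r) := by
    rw [integral_fun_norm_euclideanSpace_fin_three (fun r ↦ 1 / r * heatR t (‖x‖ + r)),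
      smul_eq_mul]
    congr 1
    refine setIntegral_congr_fun measurableSet_Ioi fun r (hr : 0 < r) ↦ ?_
    rw [smul_eq_mul]
    field_simp
  have hsqrt : sqrt (4 * π * t) = 2 * sqrt (π * t) := by
    rw [mul_assoc, sqrt_mul zero_le_four, show (4 : ℝ) = 2 ^ 2 by norm_num, sqrt_sq zero_le_two]
  rw [hrad, integral_Ioi_mul_heatR_add ht, integral_Ioi_heatR ht, heatR,
    rpow_neg_three_halves (by positivity), hsqrt]
  field_simp

theorem radial_heat_integral (t : ℝ) (ht : 0 < t) (x : E3) (hx : x ≠ 0) :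
    ∫ y : E3, 1 / ‖y‖ * heatR t (‖x‖ + ‖y‖)
      = (Real.sqrt (π * t))⁻¹ * Real.exp (-‖x‖ ^ 2 / (4 * t))
        - ‖x‖ / (2 * t) * erfc (‖x‖ / (2 * Real.sqrt t)) :=
  radial_heat_integral_general t ht x

end
end

section
/- Lower bound for the total mass: for all T, β > 0 and every x ∈ ℝ³ \ {0}, 1 + Q_T^β(x) ≥ (√T/(|x|√π)) · e^{−|x|²/(4T)}. -/
open MeasureTheory Real
open scoped Classical

noncomputable section

/-!
Since `e^{cw} - 1 ≥ cw`, `Q_T^β(x)` is at least `(|x|√(πT))⁻¹ ∫₀^∞ w e^{-(|x|+w)²/(4T)} dw`.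
Writing `w = (w + |x|) - |x|`, the first part integrates exactly to `2T e^{-|x|²/(4T)}`,
and the second is at most `|x|` times the half-line Gaussian integral `√(πT)`. This gives
`1 + Q_T^β(x) ≥ 2 √T/(|x|√π) e^{-|x|²/(4T)}`, twice the claimed bound.
-/

open Filter Set Topology

lemma integrable_exp_neg_mul_sq_add_mul {b : ℝ} (hb : 0 < b) (d : ℝ) :
    Integrable fun x : ℝ => exp (-b * x ^ 2 + d * x) := by
  refine (((integrable_exp_neg_mul_sq hb).comp_sub_right (d / (2 * b))).const_mul
    (exp (d ^ 2 / (4 * b)))).congr (Eventually.of_forall fun x => ?_)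
  simp only [← exp_add]
  congr 1
  field_simp
  ring

section ShiftedGaussian

variable {T : ℝ}

lemma integrable_exp_mul_mul_exp_neg_add_sq (hT : 0 < T) (r d : ℝ) :
    Integrable fun w : ℝ => exp (d * w) * exp (-(r + w) ^ 2 / (4 * T)) := by
  refine ((integrable_exp_neg_mul_sq_add_mul (b := (4 * T)⁻¹) (by positivity)
    (d - r / (2 * T))).const_mul (exp (-r ^ 2 / (4 * T)))).congr
    (Eventually.of_forall fun w => ?_)
  simp only [← exp_add]
  congr 1
  field_simp
  ring

lemma integrable_exp_neg_add_sq (hT : 0 < T) (r : ℝ) :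
    Integrable fun w : ℝ => exp (-(r + w) ^ 2 / (4 * T)) := by
  simpa using integrable_exp_mul_mul_exp_neg_add_sq hT r 0

lemma hasDerivAt_exp_neg_add_sq (hT : T ≠ 0) (r w : ℝ) :
    HasDerivAt (fun w => -(2 * T) * exp (-(r + w) ^ 2 / (4 * T)))
      ((w + r) * exp (-(r + w) ^ 2 / (4 * T))) w := by
  have hinner :
      HasDerivAt (fun w : ℝ => -(r + w) ^ 2 / (4 * T)) (-(2 * (r + w)) / (4 * T)) w := by
    simpa using (((hasDerivAt_id w).const_add r).pow 2).neg.div_const (4 * T)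
  refine (hinner.exp.const_mul (-(2 * T))).congr_deriv ?_
  field_simp
  ring

lemma tendsto_exp_neg_add_sq_atTop (hT : 0 < T) (r : ℝ) :
    Tendsto (fun w => exp (-(r + w) ^ 2 / (4 * T))) atTop (𝓝 0) := by
  have hsq : Tendsto (fun w : ℝ => (r + w) ^ 2) atTop atTop :=
    (tendsto_pow_atTop two_ne_zero).comp (tendsto_atTop_add_const_left _ r tendsto_id)
  exact tendsto_exp_atBot.comp
    ((tendsto_neg_atTop_atBot.comp hsq).atBot_div_const (by positivity))

lemma mul_integral_Ioi_mul_exp_neg_add_sq_le (hT : 0 < T) {c : ℝ} (hc : 0 ≤ c) (r : ℝ) :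
    c * ∫ w in Ioi (0 : ℝ), w * exp (-(r + w) ^ 2 / (4 * T))
      ≤ ∫ w in Ioi (0 : ℝ), (exp (c * w) - 1) * exp (-(r + w) ^ 2 / (4 * T)) := by
  rw [← integral_const_mul]
  refine integral_mono_of_nonneg (ae_restrict_of_forall_mem measurableSet_Ioi fun w hw => ?_)
    ?_ (ae_restrict_of_forall_mem measurableSet_Ioi fun w _ => ?_)
  · have := mem_Ioi.mp hw
    positivity
  · refine ((integrable_exp_mul_mul_exp_neg_add_sq hT r c).sub
      (integrable_exp_neg_add_sq hT r)).integrableOn.congr_fun (fun w _ => ?_) measurableSet_Ioi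
    simp only [Pi.sub_apply]
    ring
  · simp only [← mul_assoc]
    exact mul_le_mul_of_nonneg_right (by linarith [add_one_le_exp (c * w)]) (exp_pos _).le

variable {r : ℝ}

lemma integrableOn_Ioi_add_mul_exp_neg_add_sq (hT : 0 < T) (hr : 0 ≤ r) :
    IntegrableOn (fun w => (w + r) * exp (-(r + w) ^ 2 / (4 * T))) (Ioi (0 : ℝ)) :=
  integrableOn_Ioi_deriv_of_nonneg
    (hasDerivAt_exp_neg_add_sq hT.ne' r 0).continuousAt.continuousWithinAt
    (fun w _ => hasDerivAt_exp_neg_add_sq hT.ne' r w)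
    (fun w hw => mul_nonneg (by linarith [mem_Ioi.mp hw]) (exp_pos _).le)
    ((tendsto_exp_neg_add_sq_atTop hT r).const_mul _)

lemma integral_Ioi_add_mul_exp_neg_add_sq (hT : 0 < T) (hr : 0 ≤ r) :
    ∫ w in Ioi (0 : ℝ), (w + r) * exp (-(r + w) ^ 2 / (4 * T))
      = 2 * T * exp (-r ^ 2 / (4 * T)) := by
  rw [integral_Ioi_of_hasDerivAt_of_nonneg
    (hasDerivAt_exp_neg_add_sq hT.ne' r 0).continuousAt.continuousWithinAt
    (fun w _ => hasDerivAt_exp_neg_add_sq hT.ne' r w)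
    (fun w hw => mul_nonneg (by linarith [mem_Ioi.mp hw]) (exp_pos _).le)
    ((tendsto_exp_neg_add_sq_atTop hT r).const_mul _)]
  simp

lemma integral_Ioi_exp_neg_add_sq_le (hT : 0 < T) (hr : 0 ≤ r) :
    ∫ w in Ioi (0 : ℝ), exp (-(r + w) ^ 2 / (4 * T)) ≤ √(π * T) := by
  calc ∫ w in Ioi (0 : ℝ), exp (-(r + w) ^ 2 / (4 * T))
      ≤ ∫ w in Ioi (0 : ℝ), exp (-(4 * T)⁻¹ * w ^ 2) := by
        refine setIntegral_mono_on (integrable_exp_neg_add_sq hT r).integrableOn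
          (integrable_exp_neg_mul_sq (by positivity)).integrableOn measurableSet_Ioi fun w hw => ?_
        rw [exp_le_exp, neg_mul, inv_mul_eq_div, neg_div, neg_le_neg_iff,
          div_le_div_iff_of_pos_right (by positivity)]
        nlinarith [mem_Ioi.mp hw]
    _ = √(π * T) := by
        rw [integral_gaussian_Ioi, div_inv_eq_mul, show π * (4 * T) = 2 ^ 2 * (π * T) by ring,
          sqrt_mul (by norm_num), sqrt_sq zero_le_two]
        ring

lemma sub_le_integral_Ioi_mul_exp_neg_add_sq (hT : 0 < T) (hr : 0 ≤ r) :
    2 * T * exp (-r ^ 2 / (4 * T)) - r * √(π * T)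
      ≤ ∫ w in Ioi (0 : ℝ), w * exp (-(r + w) ^ 2 / (4 * T)) := by
  have hsplit : ∫ w in Ioi (0 : ℝ), w * exp (-(r + w) ^ 2 / (4 * T))
      = (∫ w in Ioi (0 : ℝ), (w + r) * exp (-(r + w) ^ 2 / (4 * T)))
        - r * ∫ w in Ioi (0 : ℝ), exp (-(r + w) ^ 2 / (4 * T)) := by
    rw [← integral_const_mul, ← integral_sub (integrableOn_Ioi_add_mul_exp_neg_add_sq hT hr)
      ((integrable_exp_neg_add_sq hT r).integrableOn.const_mul r)]
    congr 1 with w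
    ring
  rw [hsplit, integral_Ioi_add_mul_exp_neg_add_sq hT hr]
  gcongr
  exact integral_Ioi_exp_neg_add_sq_le hT hr

end ShiftedGaussian

lemma two_mul_sub_one_le_Qbeta {β T : ℝ} (hβ : 0 < β) (hT : 0 < T) {x : E3} (hx : x ≠ 0) :
    2 * (√T / (‖x‖ * √π) * exp (-‖x‖ ^ 2 / (4 * T))) - 1 ≤ Qbeta β T x := by
  have hr : 0 < ‖x‖ := norm_pos_iff.mpr hx
  have hc : 0 < 4 * π * β := by positivity
  rw [Qbeta, if_neg hT.ne', le_inv_mul_iff₀ (by positivity)]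
  calc 4 * π * β * ‖x‖ * √(π * T) * (2 * (√T / (‖x‖ * √π) * exp (-‖x‖ ^ 2 / (4 * T))) - 1)
      = 4 * π * β * (2 * T * exp (-‖x‖ ^ 2 / (4 * T)) - ‖x‖ * √(π * T)) := by
        rw [sqrt_mul pi_pos.le T]
        field_simp
        linear_combination 2 * exp (-(‖x‖ ^ 2 / (4 * T))) * mul_self_sqrt hT.le
    _ ≤ 4 * π * β * ∫ w in Ioi (0 : ℝ), w * exp (-(‖x‖ + w) ^ 2 / (4 * T)) := by
        gcongr
        exact sub_le_integral_Ioi_mul_exp_neg_add_sq hT hr.le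
    _ ≤ _ := mul_integral_Ioi_mul_exp_neg_add_sq_le hT hc.le ‖x‖

theorem total_mass_lower_bound (T β : ℝ) (hT : 0 < T) (hβ : 0 < β)
    (x : E3) (hx : x ≠ 0) :
    Real.sqrt T / (‖x‖ * Real.sqrt π) * Real.exp (-‖x‖ ^ 2 / (4 * T))
      ≤ 1 + Qbeta β T x := by
  have hbound : 0 ≤ √T / (‖x‖ * √π) * exp (-‖x‖ ^ 2 / (4 * T)) := by positivity
  linarith [two_mul_sub_one_le_Qbeta hβ hT hx]

end
end

section
/- Upper bound for the mass excess function: fix L > 0. There exists a constant C_L > 0 such that for all T, β > 0 with β√T ≤ L and all x ∈ ℝ³ \ {0}: Q_T^β(x) ≤ C_L · (1 + √T/|x|) · e^{−4πβ|x|}. -/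
open MeasureTheory Real
open scoped Classical

noncomputable section

/-! With `b = 4πβ`, `r = |x|` and `a = 2bT - r`, bound `e^{bw} - 1 ≤ bw e^{bw}` and complete the
square: `bw - (r + w)²/(4T) = b²T - br - (w - a)²/(4T)`. Since `w ≤ |a| + |w - a|`, the integral
defining `Q_T^β(x)` is at most `b e^{b²T - br}` times the Gaussian mass plus first absolute moment
around `a`, i.e. `|a| √(4πT) + 4T`. The factor `e^{b²T} = e^{16π²(β√T)²}` is controlled by `L`, and
what remains is affine in `√T/|x|`. -/

theorem integral_Ioi_mul_exp_neg_mul_sq_s12 {c : ℝ} (hc : 0 < c) :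
    ∫ s in Set.Ioi (0 : ℝ), s * exp (-c * s ^ 2) = (2 * c)⁻¹ := by
  have h := integral_mul_cexp_neg_mul_sq (b := (c : ℂ)) (by simpa using hc)
  rw [← Complex.ofReal_ofNat, ← Complex.ofReal_mul, ← Complex.ofReal_inv] at h
  refine Complex.ofReal_injective (h ▸ ?_)
  rw [← integral_complex_ofReal]
  push_cast
  rfl

theorem integral_abs_mul_exp_neg_mul_sq {c : ℝ} (hc : 0 < c) :
    ∫ s, |s| * exp (-c * s ^ 2) = c⁻¹ := by
  have h := integral_comp_abs (f := fun s : ℝ => s * exp (-c * s ^ 2))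
  simp only [sq_abs] at h
  rw [h, integral_Ioi_mul_exp_neg_mul_sq_s12 hc]
  field_simp

theorem integrable_abs_mul_exp_neg_mul_sq {c : ℝ} (hc : 0 < c) :
    Integrable fun s : ℝ => |s| * exp (-c * s ^ 2) := by
  simpa only [abs_mul, abs_of_pos (exp_pos _)] using (integrable_mul_exp_neg_mul_sq hc).abs

theorem integrable_const_add_abs_mul_exp_neg_mul_sq (a : ℝ) {c : ℝ} (hc : 0 < c) :
    Integrable fun s : ℝ => (a + |s|) * exp (-c * s ^ 2) := by
  refine (((integrable_exp_neg_mul_sq hc).const_mul a).add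
    (integrable_abs_mul_exp_neg_mul_sq hc)).congr (.of_forall fun s => ?_)
  simp only [Pi.add_apply]
  ring

theorem integral_const_add_abs_mul_exp_neg_mul_sq (a : ℝ) {c : ℝ} (hc : 0 < c) :
    ∫ s, (a + |s|) * exp (-c * s ^ 2) = a * √(π / c) + c⁻¹ := by
  simp only [add_mul]
  rw [integral_add ((integrable_exp_neg_mul_sq hc).const_mul a)
    (integrable_abs_mul_exp_neg_mul_sq hc), integral_const_mul, integral_gaussian,
    integral_abs_mul_exp_neg_mul_sq hc]

theorem exp_sub_one_le_mul_exp (x : ℝ) : exp x - 1 ≤ x * exp x := by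
  have h := mul_le_mul_of_nonneg_left (add_one_le_exp (-x)) (exp_pos x).le
  rw [exp_neg, mul_inv_cancel₀ (exp_pos x).ne'] at h
  linarith

theorem exp_sub_one_mul_exp_neg_sq_le {b : ℝ} (hb : 0 ≤ b) (r w : ℝ) {T : ℝ} (hT : T ≠ 0) :
    (exp (b * w) - 1) * exp (-(r + w) ^ 2 / (4 * T)) ≤
      b * exp (b ^ 2 * T - b * r) *
        ((|2 * b * T - r| + |w - (2 * b * T - r)|) *
          exp (-(4 * T)⁻¹ * (w - (2 * b * T - r)) ^ 2)) := by
  have complete_sq : b * w + -(r + w) ^ 2 / (4 * T) =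
      b ^ 2 * T - b * r + -(4 * T)⁻¹ * (w - (2 * b * T - r)) ^ 2 := by
    field_simp
    ring
  have hw : w ≤ |2 * b * T - r| + |w - (2 * b * T - r)| := by
    linarith [le_abs_self (2 * b * T - r), le_abs_self (w - (2 * b * T - r))]
  calc (exp (b * w) - 1) * exp (-(r + w) ^ 2 / (4 * T))
      ≤ b * w * exp (b * w) * exp (-(r + w) ^ 2 / (4 * T)) := by
        gcongr
        exact exp_sub_one_le_mul_exp _
    _ = b * exp (b ^ 2 * T - b * r) * (w * exp (-(4 * T)⁻¹ * (w - (2 * b * T - r)) ^ 2)) := by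
        rw [mul_assoc (b * w), ← exp_add, complete_sq, exp_add]
        ring
    _ ≤ _ := by gcongr

theorem integral_exp_sub_one_mul_exp_neg_sq_le {b T : ℝ} (hb : 0 ≤ b) (hT : 0 < T) (r : ℝ) :
    ∫ w in Set.Ioi (0 : ℝ), (exp (b * w) - 1) * exp (-(r + w) ^ 2 / (4 * T)) ≤
      b * exp (b ^ 2 * T - b * r) * (|2 * b * T - r| * √(π * (4 * T)) + 4 * T) := by
  set a := 2 * b * T - r
  have hc : 0 < (4 * T)⁻¹ := by positivity
  have hG := ((integrable_const_add_abs_mul_exp_neg_mul_sq |a| hc).comp_sub_right a).const_mul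
    (b * exp (b ^ 2 * T - b * r))
  calc ∫ w in Set.Ioi (0 : ℝ), (exp (b * w) - 1) * exp (-(r + w) ^ 2 / (4 * T))
      ≤ ∫ w in Set.Ioi (0 : ℝ), b * exp (b ^ 2 * T - b * r) *
          ((|a| + |w - a|) * exp (-(4 * T)⁻¹ * (w - a) ^ 2)) := by
        refine integral_mono_of_nonneg ?_ hG.integrableOn
          (.of_forall fun w => exp_sub_one_mul_exp_neg_sq_le hb r w hT.ne')
        filter_upwards [ae_restrict_mem measurableSet_Ioi] with w (hw : 0 < w)
        have : 1 ≤ exp (b * w) := one_le_exp (by positivity)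
        have : 0 ≤ exp (b * w) - 1 := by linarith
        positivity
    _ ≤ ∫ w, b * exp (b ^ 2 * T - b * r) *
          ((|a| + |w - a|) * exp (-(4 * T)⁻¹ * (w - a) ^ 2)) :=
        setIntegral_le_integral hG (.of_forall fun w => by positivity)
    _ = _ := by
        rw [integral_const_mul, integral_sub_right_eq_self
          (fun s => (|a| + |s|) * exp (-(4 * T)⁻¹ * s ^ 2)),
          integral_const_add_abs_mul_exp_neg_mul_sq _ hc, div_inv_eq_mul, inv_inv]

theorem Qbeta_le {β T : ℝ} (hβ : 0 < β) (hT : 0 < T) {x : E3} (hx : x ≠ 0) :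
    Qbeta β T x ≤ exp (16 * π ^ 2 * (β * √T) ^ 2) *
      (2 + (16 * π * (β * √T) + 4 / √π) * (√T / ‖x‖)) * exp (-(4 * π * β * ‖x‖)) := by
  have hr : 0 < ‖x‖ := norm_pos_iff.2 hx
  have hb : 0 ≤ 4 * π * β := by positivity
  have habs : |2 * (4 * π * β) * T - ‖x‖| ≤ 2 * (4 * π * β) * T + ‖x‖ :=
    (abs_sub _ _).trans_eq <| by rw [abs_of_nonneg (by positivity), abs_of_pos hr]
  rw [Qbeta, if_neg hT.ne']
  calc _ ≤ (4 * π * β * ‖x‖ * √(π * T))⁻¹ *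
          (4 * π * β * exp ((4 * π * β) ^ 2 * T - 4 * π * β * ‖x‖) *
            ((2 * (4 * π * β) * T + ‖x‖) * √(π * (4 * T)) + 4 * T)) := by
        grw [integral_exp_sub_one_mul_exp_neg_sq_le hb hT, habs]
    _ = _ := by
        obtain ⟨s, hs, rfl⟩ : ∃ s, 0 < s ∧ T = s ^ 2 := ⟨√T, by positivity, (sq_sqrt hT.le).symm⟩
        rw [sqrt_sq hs.le, sqrt_mul pi_pos.le, sqrt_mul pi_pos.le, sqrt_sq hs.le,
          show 4 * s ^ 2 = (2 * s) ^ 2 by ring, sqrt_sq (by positivity), sub_eq_add_neg, exp_add]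
        field_simp
        ring_nf

theorem mass_excess_upper_bound (L : ℝ) (hL : 0 < L) :
    ∃ C > 0, ∀ T β : ℝ, 0 < T → 0 < β → β * Real.sqrt T ≤ L →
      ∀ x : E3, x ≠ 0 →
        Qbeta β T x ≤ C * (1 + Real.sqrt T / ‖x‖) * Real.exp (-(4 * π * β * ‖x‖)) := by
  refine ⟨exp (16 * π ^ 2 * L ^ 2) * (2 + 16 * π * L + 4 / √π), by positivity, ?_⟩
  intro T β hT hβ hβT x hx
  have hρ : 0 ≤ √T / ‖x‖ := by positivity
  have hA : 0 ≤ 16 * π * L + 4 / √π := by positivity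
  calc Qbeta β T x
      ≤ exp (16 * π ^ 2 * (β * √T) ^ 2) *
          (2 + (16 * π * (β * √T) + 4 / √π) * (√T / ‖x‖)) * exp (-(4 * π * β * ‖x‖)) :=
        Qbeta_le hβ hT hx
    _ ≤ exp (16 * π ^ 2 * L ^ 2) * (2 + (16 * π * L + 4 / √π) * (√T / ‖x‖)) *
          exp (-(4 * π * β * ‖x‖)) := by
        have : 0 ≤ β * √T := by positivity
        gcongr
    _ ≤ _ := by
        gcongr ?_ * _
        rw [mul_assoc (exp _) (2 + 16 * π * L + 4 / √π)]
        gcongr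
        nlinarith

end
end
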